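/- Let V be a finite set of primes, D ∈ ℕ, and for 1 ≤ k ≤ D let Π_k(V) be the set of integers having exactly k distinct prime factors, all in V, each appearing with exponent in {1,...,D}. Then Π_k(V) can be written as a union of at most C_D · (log|V| + 1) sets Λ each of which has property 𝒪: there exist pairwise disjoint sets S₁, ..., S_k of prime powers of primes in V such that Λ ⊆ S₁⋯S_k (the product set) and the elements of S₁ ∪ ... ∪ S_k are pairwise coprime. -/

import Mathlib

/-!
A counting argument gives `O_k(log |V|)` colourings `c : V → Fin k` such that every `k`-subset
of `V` is coloured injectively by one of them. For a colouring `c` and an exponent pattern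
`e : Fin k → [1, D]` put `S_j = {p ^ e j : c p = j}`: two elements of `⋃ S_j` built from the same
prime lie in the same `S_j` with the same exponent, so distinct elements are coprime and
`S₁⋯S_k` has property `𝒪`. A number `∏_{p ∈ S} p ^ γ p` of `Π_k(V)` lies in `S₁⋯S_k` for any `c`
injective on `S` and `e j = γ (c⁻¹ j)`, and there are `O_D(log |V|)` pairs `(c, e)`.
-/

open Finset

/-- `n ∈ Π_k(V)`: `n` has exactly `k` distinct prime factors, all in `V`, each
appearing with exponent in `{1,…,D}`. -/
def MemPik (V : Finset ℕ) (D k n : ℕ) : Prop :=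
  ∃ (S : Finset ℕ) (γ : ℕ → ℕ), S ⊆ V ∧ S.card = k ∧
    (∀ p ∈ S, 1 ≤ γ p ∧ γ p ≤ D) ∧ n = ∏ p ∈ S, p ^ γ p

/-- Property `𝒪` for a set `Λ` (with parameters `V`, `D`, `k`): there exist pairwise
disjoint sets `S₁,…,S_k` of prime powers (with primes in `V` and exponents in
`{1,…,D}`) whose union consists of pairwise coprime elements, such that
`Λ ⊆ S₁⋯S_k` (the product set). -/
def PropertyO (V : Finset ℕ) (D k : ℕ) (Λ : Set ℕ) : Prop :=
  ∃ S : Fin k → Set ℕ,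
    (∀ j, ∀ s ∈ S j, ∃ p ∈ V, ∃ e : ℕ, 1 ≤ e ∧ e ≤ D ∧ s = p ^ e) ∧
    (Pairwise fun j j' => Disjoint (S j) (S j')) ∧
    (∀ x y : ℕ, (∃ j, x ∈ S j) → (∃ j, y ∈ S j) → x ≠ y → Nat.Coprime x y) ∧
    (∀ n ∈ Λ, ∃ s : Fin k → ℕ, (∀ j, s j ∈ S j) ∧ n = ∏ j, s j)

open scoped Pointwise

theorem exists_forall_exists_of_card_mul_pow_lt {ι β : Type*} [Fintype β] [Nonempty β]
    (𝒯 : Finset ι) (P : ι → β → Prop) [∀ T, DecidablePred (P T)] {a b r : ℕ}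
    (hbad : ∀ T ∈ 𝒯, b * #{f | ¬ P T f} ≤ a * Fintype.card β) (h : #𝒯 * a ^ r < b ^ r) :
    ∃ F : Fin r → β, ∀ T ∈ 𝒯, ∃ i, P T (F i) := by
  classical
  by_contra! hF
  have hcover : (univ : Finset (Fin r → β)) ⊆
      𝒯.biUnion fun T => Fintype.piFinset fun _ => ({f | ¬ P T f} : Finset β) := by
    intro F _
    obtain ⟨T, hT, hFT⟩ := hF F
    exact mem_biUnion.2 ⟨T, hT, Fintype.mem_piFinset.2 fun i => by simpa using hFT i⟩
  refine (Nat.mul_lt_mul_right (pow_pos (Fintype.card_pos (α := β)) r)).2 h |>.not_ge ?_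
  calc b ^ r * Fintype.card β ^ r = b ^ r * #(univ : Finset (Fin r → β)) := by simp
    _ ≤ b ^ r * ∑ T ∈ 𝒯, #(Fintype.piFinset fun _ : Fin r => ({f | ¬ P T f} : Finset β)) :=
        Nat.mul_le_mul_left _ ((card_le_card hcover).trans card_biUnion_le)
    _ = ∑ T ∈ 𝒯, (b * #({f | ¬ P T f} : Finset β)) ^ r := by
        simp [mul_sum, mul_pow, Fintype.card_piFinset]
    _ ≤ ∑ T ∈ 𝒯, (a * Fintype.card β) ^ r :=
        sum_le_sum fun T hT => Nat.pow_le_pow_left (hbad T hT) r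
    _ = #𝒯 * a ^ r * Fintype.card β ^ r := by rw [sum_const, smul_eq_mul, mul_pow, mul_assoc]

theorem pow_card_le_pow_mul_card_injOn {α : Type*} [Fintype α] [DecidableEq α] {k : ℕ}
    (T : Finset α) (hT : #T = k) :
    k ^ Fintype.card α ≤ k ^ k * #{f : α → Fin k | Set.InjOn f T} := by
  let e : T ≃ Fin k := Fintype.equivFinOfCardEq (by simpa using hT)
  let extend : ({x // x ∉ T} → Fin k) → α → Fin k := fun g x =>
    if hx : x ∈ T then e ⟨x, hx⟩ else g ⟨x, hx⟩
  have hcard : k ^ (Fintype.card α - k) ≤ #{f : α → Fin k | Set.InjOn f T} := by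
    have := card_le_card_of_injOn (s := univ) (t := ({f : α → Fin k | Set.InjOn f T} : Finset _))
      extend ?_ ?_
    · simpa [Fintype.card_subtype_compl, hT] using this
    · intro g _
      simp only [coe_filter, mem_univ, true_and, Set.mem_ofPred_eq]
      intro x hx y hy hxy
      rw [mem_coe] at hx hy
      simp only [extend, dif_pos hx, dif_pos hy] at hxy
      simpa using e.injective hxy
    · intro g _ g' _ hgg'
      funext x
      simpa [extend, x.2] using congrFun hgg' x
  calc k ^ Fintype.card α = k ^ k * k ^ (Fintype.card α - k) := by
        rw [← pow_add, Nat.add_sub_cancel' (hT ▸ card_le_univ T)]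
    _ ≤ _ := Nat.mul_le_mul_left _ hcard

theorem two_mul_sub_one_pow_le {m : ℕ} (hm : 1 ≤ m) : 2 * (m - 1) ^ m ≤ m ^ m := by
  have bernoulli := pow_add_mul_le_add_pow (a := m - 1) (b := 1) (Nat.zero_le _) (by omega) m
  rw [Nat.sub_add_cancel hm, mul_one, Nat.cast_id] at bernoulli
  have : (m - 1) ^ m ≤ m * (m - 1) ^ (m - 1) := by
    conv_lhs => rw [← Nat.sub_add_cancel hm, pow_succ']
    exact Nat.mul_le_mul_right _ (Nat.sub_le m 1)
  omega

theorem mul_sub_one_pow_lt_pow {c m t : ℕ} (hc : c < 2 ^ t) (hm : 1 ≤ m) :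
    c * (m - 1) ^ (m * t) < m ^ (m * t) := by
  have key : 2 ^ t * (m - 1) ^ (m * t) ≤ m ^ (m * t) := by
    rw [pow_mul, pow_mul, ← mul_pow]
    exact Nat.pow_le_pow_left (two_mul_sub_one_pow_le hm) t
  rcases Nat.eq_zero_or_pos ((m - 1) ^ (m * t)) with h0 | hpos
  · rw [h0, mul_zero]
    exact Nat.pow_pos hm
  · exact (Nat.mul_lt_mul_of_pos_right hc hpos).trans_le key

theorem choose_lt_two_pow_mul_log {k : ℕ} (hk : k ≠ 0) (N : ℕ) :
    N.choose k < 2 ^ (k * (Nat.log 2 N + 1)) :=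
  calc N.choose k ≤ N ^ k := Nat.choose_le_pow N k
    _ < (2 ^ (Nat.log 2 N + 1)) ^ k :=
        Nat.pow_lt_pow_left (Nat.lt_pow_succ_log_self (by norm_num) N) hk
    _ = 2 ^ (k * (Nat.log 2 N + 1)) := by rw [← pow_mul, mul_comm]

/- A function that is not injective on `T` has density at most `1 - 1 / k ^ k`, so `k ^ k * t`
random functions all fail on a fixed `T` with probability below `2 ^ (-t)`, while there are fewer
than `2 ^ t` sets `T`. -/
theorem exists_perfectHashFamily (α : Type*) [Fintype α] [DecidableEq α] {k : ℕ} (hk : 1 ≤ k) :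
    ∃ F : Fin (k ^ k * (k * (Nat.log 2 (Fintype.card α) + 1))) → α → Fin k,
      ∀ T : Finset α, #T = k → ∃ i, Set.InjOn (F i) T := by
  set t := k * (Nat.log 2 (Fintype.card α) + 1)
  have : Nonempty (Fin k) := ⟨⟨0, hk⟩⟩
  have hm : 1 ≤ k ^ k := Nat.one_le_pow k k hk
  have hbad : ∀ T ∈ powersetCard k (univ : Finset α),
      k ^ k * #{f : α → Fin k | ¬ Set.InjOn f T} ≤ (k ^ k - 1) * Fintype.card (α → Fin k) := by
    intro T hT
    have hgood := pow_card_le_pow_mul_card_injOn T (mem_powersetCard.1 hT).2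
    have hsplit := card_filter_add_card_filter_not (s := (univ : Finset (α → Fin k)))
      (fun f => Set.InjOn f T)
    rw [card_univ] at hsplit
    rw [Fintype.card_fun, Fintype.card_fin] at hsplit ⊢
    obtain ⟨m, hkk⟩ : ∃ m, k ^ k = m + 1 := ⟨k ^ k - 1, by omega⟩
    rw [hkk] at hgood ⊢
    rw [Nat.add_sub_cancel]
    nlinarith
  have hcount :
      #(powersetCard k (univ : Finset α)) * (k ^ k - 1) ^ (k ^ k * t) < (k ^ k) ^ (k ^ k * t) := by
    rw [card_powersetCard, card_univ]
    exact mul_sub_one_pow_lt_pow (choose_lt_two_pow_mul_log (by omega) _) hm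
  obtain ⟨F, hF⟩ := exists_forall_exists_of_card_mul_pow_lt _ _ hbad hcount
  exact ⟨F, fun T hT => hF T (mem_powersetCard.2 ⟨subset_univ T, hT⟩)⟩

theorem Finset.exists_perfectHashFamily {α : Type*} [DecidableEq α] (V : Finset α) {k : ℕ}
    (hk : 1 ≤ k) :
    ∃ F : Fin (k ^ k * (k * (Nat.log 2 #V + 1))) → α → Fin k,
      ∀ T ⊆ V, #T = k → ∃ i, Set.InjOn (F i) T := by
  have hV := _root_.exists_perfectHashFamily V hk
  rw [Fintype.card_coe] at hV
  obtain ⟨F, hF⟩ := hV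
  refine ⟨fun i x => if hx : x ∈ V then F i ⟨x, hx⟩ else ⟨0, hk⟩, fun T hTV hT => ?_⟩
  obtain ⟨i, hi⟩ := hF (T.subtype (· ∈ V)) (by rwa [card_subtype, filter_true_of_mem hTV])
  refine ⟨i, fun x hx y hy hxy => ?_⟩
  have hxV := hTV hx
  have hyV := hTV hy
  simp only [dif_pos hxV, dif_pos hyV] at hxy
  simpa using hi (by simpa using hx) (by simpa using hy) hxy

/- The paper's `S_j` for the colouring `c = f_i` and the exponent pattern `e = γ`. -/
def fiberPowers {k : ℕ} (V : Finset ℕ) (c : ℕ → Fin k) (e : Fin k → ℕ) (j : Fin k) : Set ℕ :=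
  (· ^ e j) '' {p | p ∈ V ∧ c p = j}

section fiberPowers

variable {k : ℕ} {V : Finset ℕ} {c : ℕ → Fin k} {e : Fin k → ℕ}

/- A prime determines its fibre, and the fibre determines the exponent. -/
theorem eq_of_not_coprime_of_mem_fiberPowers (hV : ∀ p ∈ V, p.Prime) {j j' : Fin k} {x y : ℕ}
    (hx : x ∈ fiberPowers V c e j) (hy : y ∈ fiberPowers V c e j') (hxy : ¬ x.Coprime y) :
    j = j' ∧ x = y := by
  obtain ⟨p, ⟨hp, rfl⟩, rfl⟩ := hx
  obtain ⟨q, ⟨hq, rfl⟩, rfl⟩ := hy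
  obtain rfl : p = q := by
    by_contra hpq
    exact hxy (.pow _ _ ((Nat.coprime_primes (hV p hp) (hV q hq)).2 hpq))
  exact ⟨rfl, rfl⟩

theorem propertyO_prod_fiberPowers (hV : ∀ p ∈ V, p.Prime) {D : ℕ} (he : ∀ j, e j ∈ Icc 1 D) :
    PropertyO V D k (∏ j, fiberPowers V c e j) := by
  refine ⟨fiberPowers V c e, ?_, fun j j' hjj' => ?_, ?_, fun n hn => ?_⟩
  · rintro j _ ⟨p, ⟨hp, -⟩, rfl⟩
    exact ⟨p, hp, e j, (mem_Icc.1 (he j)).1, (mem_Icc.1 (he j)).2, rfl⟩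
  · refine Set.disjoint_left.2 fun x hx hx' => hjj' ?_
    refine (eq_of_not_coprime_of_mem_fiberPowers hV hx hx' ?_).1
    obtain ⟨p, ⟨hp, -⟩, rfl⟩ := hx
    rw [Nat.coprime_self, Nat.pow_eq_one]
    have := (mem_Icc.1 (he j)).1
    have := (hV p hp).one_lt
    omega
  · rintro x y ⟨j, hx⟩ ⟨j', hy⟩ hxy
    by_contra h
    exact hxy (eq_of_not_coprime_of_mem_fiberPowers hV hx hy h).2
  · obtain ⟨s, hs, rfl⟩ := (Set.mem_fintype_prod _ _).1 hn
    exact ⟨s, hs, rfl⟩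

theorem exists_prod_pow_mem_prod_fiberPowers {S : Finset ℕ} (hSV : S ⊆ V) (hS : #S = k)
    (hc : Set.InjOn c S) (γ : ℕ → ℕ) :
    ∃ ψ : Fin k → ℕ, (∀ j, ψ j ∈ S) ∧ ∏ p ∈ S, p ^ γ p ∈ ∏ j, fiberPowers V c (γ ∘ ψ) j := by
  have hsurj : Set.SurjOn c S (univ : Finset (Fin k)) :=
    surjOn_of_injOn_of_card_le c (fun _ _ => mem_coe.2 (mem_univ _)) hc (by simp [hS])
  choose ψ hψS hψ using fun j => hsurj (mem_coe.2 (mem_univ j))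
  have hψc : ∀ p ∈ S, ψ (c p) = p := fun p hp => hc (hψS _) hp (hψ _)
  refine ⟨ψ, hψS, (Set.mem_fintype_prod _ _).2 ⟨fun j => ψ j ^ γ (ψ j), fun j => ?_, ?_⟩⟩
  · exact ⟨ψ j, ⟨hSV (hψS j), hψ j⟩, rfl⟩
  · exact (prod_nbij c (fun _ _ => mem_univ _) hc hsurj fun p hp => by rw [hψc p hp]).symm

end fiberPowers

theorem natLog_two_add_one_le (N : ℕ) : (Nat.log 2 N : ℝ) + 1 ≤ 2 * (Real.log N + 1) := by
  have hlog := Real.log_natCast_nonneg N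
  have hlog2 : 1 / 2 < Real.log 2 := by linarith [Real.log_two_gt_d9]
  have : (Nat.log 2 N : ℝ) ≤ 2 * Real.log N :=
    calc (Nat.log 2 N : ℝ) ≤ Real.logb 2 N := by exact_mod_cast Real.natLog_le_logb N 2
      _ = Real.log N / Real.log 2 := rfl
      _ ≤ 2 * Real.log N := by
          rw [div_le_iff₀ (by linarith)]
          nlinarith
  linarith

theorem pow_self_mul_le_pow {k D : ℕ} (hk : 1 ≤ k) (hkD : k ≤ D) (L : ℕ) :
    k ^ k * (k * L) * D ^ k ≤ D ^ (2 * D + 1) * L := by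
  have hD : 1 ≤ D := hk.trans hkD
  calc k ^ k * (k * L) * D ^ k ≤ D ^ D * (D * L) * D ^ D := by gcongr
    _ = D ^ (2 * D + 1) * L := by ring

/-- Partition lemma: there is a constant `C_D` such that for every finite set `V` of
primes and every `1 ≤ k ≤ D`, the set `Π_k(V)` can be covered by at most
`C_D · (log |V| + 1)` sets each having property `𝒪`. -/
theorem pik_cover_by_propertyO (D : ℕ) (hD : 1 ≤ D) :
    ∃ C : ℝ, 0 < C ∧
      ∀ (V : Finset ℕ), (∀ p ∈ V, p.Prime) →
        ∀ k : ℕ, 1 ≤ k → k ≤ D →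
          ∃ (r : ℕ) (Λ : Fin r → Set ℕ),
            (r : ℝ) ≤ C * (Real.log V.card + 1) ∧
            (∀ n : ℕ, MemPik V D k n → ∃ i, n ∈ Λ i) ∧
            (∀ i, PropertyO V D k (Λ i)) := by
  refine ⟨2 * D ^ (2 * D + 1), mul_pos two_pos (pow_pos (by exact_mod_cast hD) _),
    fun V hV k hk hkD => ?_⟩
  obtain ⟨F, hF⟩ := V.exists_perfectHashFamily hk
  let ι := Fin (k ^ k * (k * (Nat.log 2 #V + 1))) × (Fin k → Icc 1 D)
  let Λ : ι → Set ℕ := fun q => ∏ j, fiberPowers V (F q.1) (fun j => q.2 j) j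
  let σ := Fintype.equivFin ι
  refine ⟨Fintype.card ι, Λ ∘ σ.symm, ?_, fun n hn => ?_,
    fun i => propertyO_prod_fiberPowers hV fun j => ((σ.symm i).2 j).2⟩
  · have hcard : Fintype.card ι = k ^ k * (k * (Nat.log 2 #V + 1)) * D ^ k := by
      simp [ι]
    calc (Fintype.card ι : ℝ) ≤ D ^ (2 * D + 1) * (Nat.log 2 #V + 1) := by
          rw [hcard]; exact_mod_cast pow_self_mul_le_pow hk hkD _
      _ ≤ D ^ (2 * D + 1) * (2 * (Real.log #V + 1)) := by
          gcongr; exact natLog_two_add_one_le _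
      _ = 2 * D ^ (2 * D + 1) * (Real.log #V + 1) := by ring
  · obtain ⟨S, γ, hSV, hS, hγ, rfl⟩ := hn
    obtain ⟨i, hi⟩ := hF S hSV hS
    obtain ⟨ψ, hψS, hmem⟩ := exists_prod_pow_mem_prod_fiberPowers hSV hS hi γ
    exact ⟨σ (i, fun j => ⟨γ (ψ j), mem_Icc.2 (hγ _ (hψS j))⟩), by
      simp only [Function.comp_apply, Equiv.symm_apply_apply, Λ]
      exact hmem⟩
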